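/- Fix N > 0. There exist constants C > 0 and a₀ > 0 such that for all a with 0 < a ≤ a₀, | ∫_ℝ q_a(z)·(log(q_a(z)/q̃(z)))² dz − 2a²/N | ≤ C·a⁴. In other words, the second moment of the log-likelihood ratio log(q_a/q̃) under q_a equals 2a²/N + O(a⁴) as a → 0⁺. -/

import Mathlib

/-!
Writing `x = 2az/N`, the mixture is `q̃ = q_a · e^{-x} cosh x`, so `log (q_a/q̃) = x - log cosh x`.
Since `x²/2 - x⁴/8 ≤ log cosh x ≤ x²/2`, the square of this is `x² - x³` up to `O(x⁴ + |x|⁵)`.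
Under `q_a` the variable `z` is Gaussian with mean `a` and variance `N/2`, and its first three
moments give `E[x² - x³] = 2a²/N - 8a⁴/N² - 8a⁶/N³`; the remainder is `O(a⁴)` because
`|x| ≤ a · (2/N)(|z - a| + 1)` for `a ≤ 1` and all moments of a Gaussian are finite.
-/

open MeasureTheory

/-- Density of the Gaussian distribution with mean `0` and variance `N/2`. -/
noncomputable def q0 (N z : ℝ) : ℝ := (Real.sqrt (Real.pi * N))⁻¹ * Real.exp (-z ^ 2 / N)

/-- Density of the Gaussian distribution with mean `a` and variance `N/2`. -/
noncomputable def qa (N a z : ℝ) : ℝ := (Real.sqrt (Real.pi * N))⁻¹ * Real.exp (-(z - a) ^ 2 / N)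

/-- The binary mixture density `½ q_a + ½ q_{-a}`. -/
noncomputable def qmix (N a z : ℝ) : ℝ := (1 / 2) * qa N a z + (1 / 2) * qa N (-a) z

/-- The log-likelihood ratio `log (q̃(z)/q₀(z))`. -/
noncomputable def llr (N a z : ℝ) : ℝ := Real.log (qmix N a z / q0 N z)

open ProbabilityTheory Real
open scoped NNReal

lemma log_cosh_le_sq_div_two (x : ℝ) : log (cosh x) ≤ x ^ 2 / 2 := by
  simpa using log_le_log (cosh_pos x) (cosh_le_exp_half_sq x)

lemma one_add_sq_div_two_le_cosh (x : ℝ) : 1 + x ^ 2 / 2 ≤ cosh x := by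
  have hsinh : (x / 2) ^ 2 ≤ sinh (x / 2) ^ 2 := by
    rcases le_total 0 x with hx | hx
    · exact pow_le_pow_left₀ (by positivity) (self_le_sinh_iff.2 (by positivity)) 2
    · nlinarith [sinh_le_self_iff.2 (by linarith : x / 2 ≤ 0),
        sinh_nonpos_iff.2 (by linarith : x / 2 ≤ 0)]
  have h := cosh_two_mul (x / 2)
  rw [mul_div_cancel₀ x two_ne_zero, cosh_sq] at h
  nlinarith

lemma sq_div_two_sub_le_log_cosh (x : ℝ) : x ^ 2 / 2 - x ^ 4 / 8 ≤ log (cosh x) := by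
  set y := x ^ 2 / 2
  have hy : 0 ≤ y := by positivity
  calc x ^ 2 / 2 - x ^ 4 / 8 = y - y ^ 2 / 2 := by ring
    _ ≤ 2 * y / (y + 2) := by
        rw [le_div_iff₀ (by positivity)]; nlinarith [pow_nonneg hy 3]
    _ ≤ log (1 + y) := le_log_one_add_of_nonneg hy
    _ ≤ log (cosh x) := log_le_log (by positivity) (one_add_sq_div_two_le_cosh x)

noncomputable def sqSubLogCoshRemainder (x : ℝ) : ℝ := (x - log (cosh x)) ^ 2 - (x ^ 2 - x ^ 3)

lemma abs_sqSubLogCoshRemainder_le (x : ℝ) :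
    |sqSubLogCoshRemainder x| ≤ (|x| ^ 4 + |x| ^ 5) / 4 := by
  have hx₄ : x ^ 4 = |x| ^ 4 := ((by decide : Even 4).pow_abs x).symm
  rw [sqSubLogCoshRemainder]
  set L := log (cosh x)
  have hL₀ : 0 ≤ L := log_nonneg (one_le_cosh x)
  have hL₁ : L ≤ x ^ 2 / 2 := log_cosh_le_sq_div_two x
  have hL₂ : |x ^ 2 / 2 - L| ≤ x ^ 4 / 8 := by
    rw [abs_le]; constructor <;> linarith [sq_div_two_sub_le_log_cosh x]
  calc |(x - L) ^ 2 - (x ^ 2 - x ^ 3)| = |L ^ 2 + 2 * x * (x ^ 2 / 2 - L)| := by ring_nf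
    _ ≤ |L ^ 2| + 2 * |x| * |x ^ 2 / 2 - L| :=
        (abs_add_le _ _).trans_eq (by rw [abs_mul, abs_mul, abs_two])
    _ ≤ x ^ 4 / 4 + 2 * |x| * (x ^ 4 / 8) := by
        gcongr
        rw [abs_of_nonneg (by positivity)]; nlinarith
    _ = (|x| ^ 4 + |x| ^ 5) / 4 := by rw [hx₄]; ring

lemma abs_sqSubLogCoshRemainder_le_of_abs_le {x a s : ℝ} (ha₀ : 0 ≤ a) (ha₁ : a ≤ 1)
    (hs : 0 ≤ s) (hx : |x| ≤ a * s) :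
    |sqSubLogCoshRemainder x| ≤ a ^ 4 * ((s ^ 4 + s ^ 5) / 4) := by
  have ha₅ : a ^ 5 ≤ a ^ 4 := pow_le_pow_of_le_one ha₀ ha₁ (by norm_num)
  calc _ ≤ (|x| ^ 4 + |x| ^ 5) / 4 := abs_sqSubLogCoshRemainder_le x
    _ ≤ ((a * s) ^ 4 + (a * s) ^ 5) / 4 := by gcongr
    _ ≤ a ^ 4 * ((s ^ 4 + s ^ 5) / 4) := by
        rw [mul_pow, mul_pow]; nlinarith [pow_nonneg hs 5]

lemma integrable_sqSubLogCoshRemainder_and_abs_integral_le {ν : Measure ℝ} {x s : ℝ → ℝ} {a : ℝ}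
    (hx : Measurable x) (ha₀ : 0 ≤ a) (ha₁ : a ≤ 1) (hs₀ : ∀ w, 0 ≤ s w)
    (hxs : ∀ w, |x w| ≤ a * s w) (hs : Integrable (fun w => (s w ^ 4 + s w ^ 5) / 4) ν) :
    Integrable (fun w => sqSubLogCoshRemainder (x w)) ν ∧
      |∫ w, sqSubLogCoshRemainder (x w) ∂ν| ≤ a ^ 4 * ∫ w, (s w ^ 4 + s w ^ 5) / 4 ∂ν := by
  have hbound (w : ℝ) := abs_sqSubLogCoshRemainder_le_of_abs_le ha₀ ha₁ (hs₀ w) (hxs w)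
  have hmeas : Measurable fun w => sqSubLogCoshRemainder (x w) := by
    unfold sqSubLogCoshRemainder; fun_prop
  have hint : Integrable (fun w => sqSubLogCoshRemainder (x w)) ν :=
    (hs.const_mul _).mono' hmeas.aestronglyMeasurable (ae_of_all _ hbound)
  refine ⟨hint, ?_⟩
  calc _ ≤ ∫ w, |sqSubLogCoshRemainder (x w)| ∂ν := abs_integral_le_integral_abs
    _ ≤ ∫ w, a ^ 4 * ((s w ^ 4 + s w ^ 5) / 4) ∂ν :=
        integral_mono hint.abs (hs.const_mul _) hbound
    _ = a ^ 4 * ∫ w, (s w ^ 4 + s w ^ 5) / 4 ∂ν := integral_const_mul _ _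

lemma MeasureTheory.MemLp.integrable_pow {α : Type*} [MeasurableSpace α] {μ : Measure α}
    [IsFiniteMeasure μ] {f : α → ℝ} {n : ℕ} (hf : MemLp f n μ) :
    Integrable (fun x => f x ^ n) μ :=
  hf.integrable_norm_pow'.mono' (hf.aestronglyMeasurable.pow n) (ae_of_all _ fun x => by simp)

section GaussianMoments

variable {v : ℝ≥0}

lemma integral_gaussianReal_zero_eq_zero_of_odd {f : ℝ → ℝ} (hf : ∀ x, f (-x) = -f x) :
    ∫ x, f x ∂gaussianReal 0 v = 0 := by
  have h : ∫ x, f x ∂gaussianReal 0 v = ∫ x, f (-x) ∂gaussianReal 0 v := by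
    conv_lhs => rw [← neg_zero, ← gaussianReal_map_neg]
    exact integral_map_equiv (MeasurableEquiv.neg ℝ) f
  simp only [hf, integral_neg] at h
  linarith

lemma integral_sq_gaussianReal_zero : ∫ x, x ^ 2 ∂gaussianReal 0 v = v := by
  rw [← variance_fun_id_gaussianReal (μ := 0),
    variance_of_integral_eq_zero measurable_id'.aemeasurable integral_id_gaussianReal]

lemma integral_cubic_gaussianReal_zero (p₀ p₁ p₂ p₃ : ℝ) :
    ∫ x, p₃ * x ^ 3 + p₂ * x ^ 2 + p₁ * x + p₀ ∂gaussianReal 0 v = p₂ * v + p₀ := by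
  have hpow (n : ℕ) : Integrable (fun x => x ^ n) (gaussianReal 0 v) :=
    (memLp_id_gaussianReal n).integrable_pow
  have h₃ := (hpow 3).const_mul p₃
  have h₂ := (hpow 2).const_mul p₂
  have h₁ : Integrable (fun x => p₁ * x) (gaussianReal 0 v) := by simpa using (hpow 1).const_mul p₁
  rw [integral_add (h₃.fun_add h₂ |>.fun_add h₁) (integrable_const _),
    integral_add (h₃.fun_add h₂) h₁, integral_add h₃ h₂, integral_const_mul, integral_const_mul,
    integral_const_mul, integral_gaussianReal_zero_eq_zero_of_odd (fun x => by ring),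
    integral_sq_gaussianReal_zero, integral_id_gaussianReal]
  simp

lemma integrable_mul_add_pow_gaussianReal (μ c m : ℝ) (n : ℕ) :
    Integrable (fun w => (c * (w + m)) ^ n) (gaussianReal μ v) :=
  (((memLp_id_gaussianReal n).add (memLp_const m)).const_mul c).integrable_pow

lemma integral_sq_sub_cube_gaussianReal_zero (c m : ℝ) :
    ∫ w, (c * (w + m)) ^ 2 - (c * (w + m)) ^ 3 ∂gaussianReal 0 v =
      c ^ 2 * (m ^ 2 + v) - c ^ 3 * (m ^ 3 + 3 * m * v) := by
  have hexpand (w : ℝ) : (c * (w + m)) ^ 2 - (c * (w + m)) ^ 3 =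
      -c ^ 3 * w ^ 3 + (c ^ 2 - 3 * m * c ^ 3) * w ^ 2 + (2 * m * c ^ 2 - 3 * m ^ 2 * c ^ 3) * w
        + (m ^ 2 * c ^ 2 - m ^ 3 * c ^ 3) := by ring
  simp_rw [hexpand, integral_cubic_gaussianReal_zero]
  ring

lemma exists_abs_integral_sqSubLogCoshRemainder_le {N : ℝ} (hN : 0 < N) :
    ∃ K ≥ 0, ∀ a, 0 < a → a ≤ 1 →
      Integrable (fun w => sqSubLogCoshRemainder (2 * a / N * (w + a))) (gaussianReal 0 v) ∧
      |∫ w, sqSubLogCoshRemainder (2 * a / N * (w + a)) ∂gaussianReal 0 v| ≤ K * a ^ 4 := by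
  set s : ℝ → ℝ := fun w => 2 / N * (|w| + 1)
  have hs (n : ℕ) : Integrable (fun w => s w ^ n) (gaussianReal 0 v) :=
    (((memLp_id_gaussianReal n).norm.add (memLp_const 1)).const_mul _).integrable_pow
  refine ⟨∫ w, (s w ^ 4 + s w ^ 5) / 4 ∂gaussianReal 0 v, by positivity, fun a ha ha₁ => ?_⟩
  have hxs (w : ℝ) : |2 * a / N * (w + a)| ≤ a * s w := by
    have hshift : |w + a| ≤ |w| + 1 := (abs_add_le w a).trans (by rw [abs_of_pos ha]; linarith)
    calc |2 * a / N * (w + a)| = a * (2 / N) * |w + a| := by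
          rw [abs_mul, abs_of_pos (by positivity : 0 < 2 * a / N)]; ring
      _ ≤ a * (2 / N) * (|w| + 1) := by gcongr
      _ = a * s w := mul_assoc _ _ _
  rw [mul_comm _ (a ^ 4)]
  exact integrable_sqSubLogCoshRemainder_and_abs_integral_le (by fun_prop) ha.le ha₁
    (fun w => by positivity) hxs (((hs 4).add (hs 5)).div_const 4)

end GaussianMoments

section Densities

variable {N : ℝ}

lemma qa_eq_gaussianPDFReal (hN : 0 < N) (a : ℝ) :
    qa N a = gaussianPDFReal a (N / 2).toNNReal := by
  ext z
  rw [qa, gaussianPDFReal_def, Real.coe_toNNReal _ (by positivity),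
    show 2 * π * (N / 2) = π * N by ring, show 2 * (N / 2) = N by ring]

lemma integral_qa_mul (hN : 0 < N) (a : ℝ) (F : ℝ → ℝ) :
    ∫ z, qa N a z * F z = ∫ w, F (w + a) ∂gaussianReal 0 (N / 2).toNNReal := by
  have hv : (N / 2).toNNReal ≠ 0 := by simpa using hN
  calc ∫ z, qa N a z * F z = ∫ z, F z ∂gaussianReal a (N / 2).toNNReal := by
        rw [integral_gaussianReal_eq_integral_smul hv, qa_eq_gaussianPDFReal hN]; rfl
    _ = ∫ z, F z ∂(gaussianReal 0 (N / 2).toNNReal).map (MeasurableEquiv.addRight a) := by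
        rw [MeasurableEquiv.coe_addRight, gaussianReal_map_add_const, zero_add]
    _ = ∫ w, F (w + a) ∂gaussianReal 0 (N / 2).toNNReal := integral_map_equiv _ F

lemma log_qa_div_qmix (hN : 0 < N) (a z : ℝ) :
    log (qa N a z / qmix N a z) = 2 * a / N * z - log (cosh (2 * a / N * z)) := by
  set x := 2 * a / N * z
  have hshift : qa N (-a) z = qa N a z * (exp (-x) * exp (-x)) := by
    rw [qa, qa, mul_assoc, ← exp_add, ← exp_add]
    congr 2
    simp only [x]
    field_simp
    ring
  have hratio : qmix N a z / qa N a z = exp (-x) * cosh x := by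
    have : qa N a z ≠ 0 := by rw [qa]; positivity
    rw [qmix, hshift, cosh_eq, exp_neg]
    field_simp
  rw [← inv_div, log_inv, hratio, log_mul (exp_pos _).ne' (cosh_pos _).ne', log_exp]
  ring

end Densities

/-- The second moment of `log(q_a/q̃)` under `q_a` equals `2a²/N + O(a⁴)` as `a → 0⁺`. -/
theorem second_moment_log_qa_qmix (N : ℝ) (hN : 0 < N) :
    ∃ C > (0 : ℝ), ∃ a₀ > (0 : ℝ), ∀ a : ℝ, 0 < a → a ≤ a₀ →
      |(∫ z : ℝ, qa N a z * (Real.log (qa N a z / qmix N a z)) ^ 2) - 2 * a ^ 2 / N|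
        ≤ C * a ^ 4 := by
  obtain ⟨K, hK, hR⟩ := exists_abs_integral_sqSubLogCoshRemainder_le (v := (N / 2).toNNReal) hN
  refine ⟨8 / N ^ 2 + 8 / N ^ 3 + K, by positivity, 1, one_pos, fun a ha ha₁ => ?_⟩
  obtain ⟨hRint, hRle⟩ := hR a ha ha₁
  set γ := gaussianReal 0 (N / 2).toNNReal
  have hpoly : ∫ w, (2 * a / N * (w + a)) ^ 2 - (2 * a / N * (w + a)) ^ 3 ∂γ =
      2 * a ^ 2 / N - 8 * a ^ 4 / N ^ 2 - 8 * a ^ 6 / N ^ 3 := by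
    rw [integral_sq_sub_cube_gaussianReal_zero, Real.coe_toNNReal _ (by positivity)]
    field_simp
    ring
  have hsplit : ∫ z, qa N a z * log (qa N a z / qmix N a z) ^ 2 =
      ∫ w, (2 * a / N * (w + a)) ^ 2 - (2 * a / N * (w + a)) ^ 3 ∂γ +
        ∫ w, sqSubLogCoshRemainder (2 * a / N * (w + a)) ∂γ := by
    rw [← integral_add ((integrable_mul_add_pow_gaussianReal _ _ _ 2).sub'
      (integrable_mul_add_pow_gaussianReal _ _ _ 3)) hRint]
    simp_rw [log_qa_div_qmix hN, integral_qa_mul hN, sqSubLogCoshRemainder]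
    ring_nf
  have ha₆ : 8 * a ^ 6 / N ^ 3 ≤ 8 * a ^ 4 / N ^ 3 := by
    gcongr 8 * ?_ / _; exact pow_le_pow_of_le_one ha.le ha₁ (by norm_num)
  have h₄ : 0 ≤ 8 * a ^ 4 / N ^ 2 := by positivity
  have h₆ : 0 ≤ 8 * a ^ 6 / N ^ 3 := by positivity
  obtain ⟨hR₁, hR₂⟩ := abs_le.1 hRle
  rw [hsplit, hpoly, abs_le, show (8 / N ^ 2 + 8 / N ^ 3 + K) * a ^ 4 =
    8 * a ^ 4 / N ^ 2 + 8 * a ^ 4 / N ^ 3 + K * a ^ 4 by ring]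
  constructor <;> linarith
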